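/- In the setup described in the context (DAG G, identifying set S for the s-t-paths, arborescence T rooted at s, S' := E \ T, and the maps v_s and v_t), the following holds: for all arcs e, e' ∈ S' \ S, if v_s(e) = v_s(e') and v_t(e) = v_t(e'), then e = e'. -/

import Mathlib

/-- The list of consecutive arcs of a list of vertices. -/
def arcsOf {V : Type*} (l : List V) : List (V × V) := l.zip l.tail

/-- `l` is (the vertex list of) a simple directed path from `u` to `v`
using only arcs from `A`. -/
def IsPathOn {V : Type*} (A : Set (V × V)) (u v : V) (l : List V) : Prop :=
  l.Nodup ∧ l.head? = some u ∧ l.getLast? = some v ∧ ∀ p ∈ arcsOf l, p ∈ A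

/-- The incidence vector of (the arc set of) a path given by vertex list `l`. -/
def pathVec {V : Type*} [DecidableEq V] (l : List V) : (V × V) → ℝ :=
  fun p => if p ∈ arcsOf l then 1 else 0

/-- `X^path`: the set of incidence vectors of simple `s`-`t`-paths in the digraph
with arc set `A`. -/
def XPath {V : Type*} [DecidableEq V] (A : Set (V × V)) (s t : V) :
    Set ((V × V) → ℝ) :=
  {x | ∃ l : List V, IsPathOn A s t l ∧ x = pathVec l}

/-- `X^flow`: the set of nonnegative `s`-`t`-flows of value 1 in the digraph with
arc set `A` (flows vanish outside `A`, and every node has the appropriate excess). -/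
def XFlow {V : Type*} [Fintype V] [DecidableEq V] (A : Set (V × V)) (s t : V) :
    Set ((V × V) → ℝ) :=
  {x | (∀ p, 0 ≤ x p) ∧ (∀ p, p ∉ A → x p = 0) ∧
    ∀ v, (∑ w, x (v, w)) - (∑ u, x (u, v)) =
      if v = s then 1 else if v = t then -1 else 0}

/-- `S` is identifying for `X`: any two distinct members of `X` differ on some arc in `S`. -/
def Identifying {V : Type*} (X : Set ((V × V) → ℝ)) (S : Set (V × V)) : Prop :=
  ∀ x ∈ X, ∀ y ∈ X, x ≠ y → ∃ e ∈ S, x e ≠ y e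

/-- The digraph with arc set `A` is acyclic: it has no directed cycle. -/
def IsAcyclicDigraph {V : Type*} (A : Set (V × V)) : Prop :=
  ¬ ∃ (a : V) (l : List V), (a :: l).Nodup ∧
      ∀ p ∈ arcsOf (a :: (l ++ [a])), p ∈ A


/-! For `e = (v, w) ∈ S' \ S`, the detour `T[s, v] · e · Q · R` (with `Q` an `S`-free path from
`w` to `v_t(e)` and `R` any path from `v_t(e)` to `t`) is an `s`-`t`-path whose `S`-arcs are
exactly those of `T[s, v_s(e)]` and of `R`: past `v_s(e)` the tree path meets no arc of `S`.
So if `e` and `e'` share `v_s` and `v_t`, their detours agree on `S` and, `S` being identifying,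
coincide. Then `e' = (v', w')` lies on the detour of `e`; it is not a tree arc, and as
`ψ(w') ≤ ψ(v_t(e))` it is not on `R`, so it is on `Q` and `ψ(w) ≤ ψ(v')`. Symmetrically
`ψ(w') ≤ ψ(v)`, which contradicts `ψ(v) < ψ(w)` and `ψ(v') < ψ(w')`. -/

section Arcs

variable {V : Type*}

@[simp] lemma arcsOf_nil : arcsOf ([] : List V) = [] := rfl

@[simp] lemma arcsOf_singleton (a : V) : arcsOf [a] = [] := rfl

@[simp] lemma arcsOf_cons_cons (a b : V) (l : List V) :
    arcsOf (a :: b :: l) = (a, b) :: arcsOf (b :: l) := rfl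

lemma arcsOf_append_cons (l₁ : List V) (a : V) (l₂ : List V) :
    arcsOf (l₁ ++ a :: l₂) = arcsOf (l₁ ++ [a]) ++ arcsOf (a :: l₂) := by
  induction l₁ using List.twoStepInduction <;> simp_all

lemma arcsOf_append_of_getLast?_of_head? {l₁ l₂ : List V} {x y : V}
    (h₁ : l₁.getLast? = some x) (h₂ : l₂.head? = some y) :
    arcsOf (l₁ ++ l₂) = arcsOf l₁ ++ (x, y) :: arcsOf l₂ := by
  obtain ⟨l₁, rfl⟩ := List.getLast?_eq_some_iff.mp h₁
  obtain ⟨l₂, rfl⟩ := List.head?_eq_some_iff.mp h₂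
  rw [List.append_assoc, List.singleton_append, arcsOf_append_cons, arcsOf_cons_cons]

lemma arcsOf_append_tail {l₁ l₂ : List V} {x : V}
    (h₁ : l₁.getLast? = some x) (h₂ : l₂.head? = some x) :
    arcsOf (l₁ ++ l₂.tail) = arcsOf l₁ ++ arcsOf l₂ := by
  obtain ⟨l₁, rfl⟩ := List.getLast?_eq_some_iff.mp h₁
  obtain ⟨l₂, rfl⟩ := List.head?_eq_some_iff.mp h₂
  rw [List.append_assoc, List.singleton_append, List.tail_cons, arcsOf_append_cons]

lemma fst_mem_of_mem_arcsOf {l : List V} {p : V × V} (h : p ∈ arcsOf l) : p.1 ∈ l :=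
  (List.of_mem_zip h).1

lemma snd_mem_tail_of_mem_arcsOf {l : List V} {p : V × V} (h : p ∈ arcsOf l) : p.2 ∈ l.tail :=
  (List.of_mem_zip h).2

lemma forall_mem_arcsOf_iff_isChain {R : V → V → Prop} {l : List V} :
    (∀ p ∈ arcsOf l, R p.1 p.2) ↔ l.IsChain R := by
  induction l using List.twoStepInduction <;> simp_all

end Arcs

lemma List.Nodup.idxOf_lt_idxOf_of_mem {α : Type*} [DecidableEq α]
    {l₁ l₂ : List α} {a u : α} (hnd : (l₁ ++ a :: l₂).Nodup) (hu : u ∈ l₂) :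
    (l₁ ++ a :: l₂).idxOf a < (l₁ ++ a :: l₂).idxOf u := by
  have ha₁ : a ∉ l₁ := fun h => List.disjoint_of_nodup_append hnd h List.mem_cons_self
  have hu₁ : u ∉ l₁ := fun h =>
    List.disjoint_of_nodup_append hnd h (List.mem_cons_of_mem a hu)
  have hua : u ≠ a := fun h => (List.nodup_cons.mp (List.nodup_append.mp hnd).2.1).1 (h ▸ hu)
  rw [List.idxOf_append_of_notMem ha₁, List.idxOf_append_of_notMem hu₁, List.idxOf_cons_self,
    List.idxOf_cons_ne _ hua.symm]
  omega

section Paths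

variable {V : Type*} {A B : Set (V × V)} {u v a : V} {l : List V}

lemma isPathOn_singleton (u : V) : IsPathOn A u u [u] := by
  simp [IsPathOn]

lemma IsPathOn.mono (hAB : A ⊆ B) (h : IsPathOn A u v l) : IsPathOn B u v l :=
  ⟨h.1, h.2.1, h.2.2.1, fun p hp => hAB (h.2.2.2 p hp)⟩

lemma IsPathOn.exists_eq_cons (h : IsPathOn A u v l) : ∃ l', l = u :: l' :=
  List.head?_eq_some_iff.mp h.2.1

lemma IsPathOn.exists_eq_append_singleton (h : IsPathOn A u v l) : ∃ l', l = l' ++ [v] :=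
  List.getLast?_eq_some_iff.mp h.2.2.1

lemma IsPathOn.split (h : IsPathOn A u v l) (ha : a ∈ l) :
    ∃ l₁ l₂, l = l₁ ++ a :: l₂ ∧
      IsPathOn A u a (l₁ ++ [a]) ∧ IsPathOn A a v (a :: l₂) := by
  obtain ⟨l₁, l₂, rfl⟩ := List.append_of_mem ha
  obtain ⟨hnd, hu, hv, harcs⟩ := h
  rw [arcsOf_append_cons] at harcs
  refine ⟨l₁, l₂, rfl, ⟨?_, ?_, by simp, fun p hp => harcs p (by simp [hp])⟩,
    ⟨hnd.sublist (by simp), rfl, ?_, fun p hp => harcs p (by simp [hp])⟩⟩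
  · exact hnd.sublist (by simp)
  · cases l₁ <;> simp_all
  · simpa using hv

end Paths

section Rank

variable {V : Type*} {A : Set (V × V)} {f : V → ℕ} {s t u v w b x : V} {l : List V}

lemma IsAcyclicDigraph.fst_ne_snd (hA : IsAcyclicDigraph A) {p : V × V} (hp : p ∈ A) :
    p.1 ≠ p.2 := by
  intro h
  refine hA ⟨p.1, [], by simp, fun q hq => ?_⟩
  obtain rfl : q = p := by simpa [arcsOf, Prod.ext_iff, h] using hq
  exact hp

lemma IsAcyclicDigraph.lt_of_le (hA : IsAcyclicDigraph A) (hf : f.Injective)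
    (hle : ∀ p ∈ A, f p.1 ≤ f p.2) (p : V × V) (hp : p ∈ A) : f p.1 < f p.2 :=
  (hle p hp).lt_of_ne (hf.ne (hA.fst_ne_snd hp))

lemma pairwise_lt_of_forall_mem_arcsOf (hf : ∀ p ∈ A, f p.1 < f p.2)
    (hl : ∀ p ∈ arcsOf l, p ∈ A) : l.Pairwise (fun a b => f a < f b) := by
  have : IsTrans V (fun a b => f a < f b) := ⟨fun _ _ _ => lt_trans⟩
  exact List.isChain_iff_pairwise.mp
    (forall_mem_arcsOf_iff_isChain.mp fun p hp => hf p (hl p hp))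

lemma isPathOn_of_forall_mem_arcsOf (hf : ∀ p ∈ A, f p.1 < f p.2) (hu : l.head? = some u)
    (hv : l.getLast? = some v) (hl : ∀ p ∈ arcsOf l, p ∈ A) : IsPathOn A u v l :=
  ⟨(pairwise_lt_of_forall_mem_arcsOf hf hl).imp (ne_of_apply_ne f ·.ne), hu, hv, hl⟩

lemma IsPathOn.rank_head_le (hf : ∀ p ∈ A, f p.1 < f p.2) (h : IsPathOn A u v l)
    (hx : x ∈ l) : f u ≤ f x := by
  obtain ⟨l', rfl⟩ := h.exists_eq_cons
  have := List.pairwise_cons.mp (pairwise_lt_of_forall_mem_arcsOf hf h.2.2.2)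
  rcases List.mem_cons.mp hx with rfl | hx
  exacts [le_rfl, (this.1 x hx).le]

lemma IsPathOn.rank_head_le_last (hf : ∀ p ∈ A, f p.1 < f p.2) (h : IsPathOn A u v l) :
    f u ≤ f v :=
  h.rank_head_le hf (List.mem_of_getLast? h.2.2.1)

lemma exists_isPathOn_append_arc_append {l₁ l₂ l₃ : List V} (hf : ∀ p ∈ A, f p.1 < f p.2)
    (h₁ : IsPathOn A s v l₁) (hvw : (v, w) ∈ A) (h₂ : IsPathOn A w b l₂)
    (h₃ : IsPathOn A b t l₃) :
    ∃ P, IsPathOn A s t P ∧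
      arcsOf P = arcsOf l₁ ++ (v, w) :: (arcsOf l₂ ++ arcsOf l₃) := by
  have harcs : arcsOf (l₁ ++ (l₂ ++ l₃.tail)) =
      arcsOf l₁ ++ (v, w) :: (arcsOf l₂ ++ arcsOf l₃) := by
    rw [arcsOf_append_of_getLast?_of_head? h₁.2.2.1 (by rw [List.head?_append, h₂.2.1]; rfl),
      arcsOf_append_tail h₂.2.2.1 h₃.2.1]
  refine ⟨_, isPathOn_of_forall_mem_arcsOf hf ?_ ?_ fun p hp => ?_, harcs⟩
  · simp [List.head?_append, h₁.2.1]
  · obtain ⟨l₂, rfl⟩ := h₂.exists_eq_append_singleton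
    obtain ⟨l₃, rfl⟩ := h₃.exists_eq_cons
    simpa [List.getLast?_append] using h₃.2.2.1
  · simp only [harcs, List.mem_append, List.mem_cons] at hp
    rcases hp with hp | rfl | hp | hp
    exacts [h₁.2.2.2 p hp, hvw, h₂.2.2.2 p hp, h₃.2.2.2 p hp]

end Rank

section Detour

variable {V : Type*} {A S T : Set (V × V)} {s t : V}

lemma exists_isPathOn_of_mem_target_or_tail
    (hcov : ∀ e ∈ A, ∃ l, IsPathOn A s t l ∧ e ∈ arcsOf l) (hS : S ⊆ A) {b : V}
    (hb : b ∈ insert t {v | ∃ w, (v, w) ∈ S}) : ∃ R, IsPathOn A b t R := by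
  rcases hb with rfl | ⟨w, hbw⟩
  · exact ⟨[b], isPathOn_singleton b⟩
  · obtain ⟨l, hl, hbwl⟩ := hcov _ (hS hbw)
    obtain ⟨-, l₂, -, -, hl₂⟩ := hl.split (fst_mem_of_mem_arcsOf hbwl)
    exact ⟨_, hl₂⟩

lemma Identifying.mem_arcsOf_iff [DecidableEq V] (hid : Identifying (XPath A s t) S)
    {P P' : List V} (hP : IsPathOn A s t P) (hP' : IsPathOn A s t P')
    (hPP' : ∀ p ∈ S, p ∈ arcsOf P ↔ p ∈ arcsOf P') (p : V × V) :
    p ∈ arcsOf P ↔ p ∈ arcsOf P' := by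
  have hvec : pathVec P = pathVec P' := by
    by_contra hne
    obtain ⟨q, hqS, hq⟩ := hid _ ⟨P, hP, rfl⟩ _ ⟨P', hP', rfl⟩ hne
    simp [pathVec, hPP' q hqS] at hq
  have := congrFun hvec p
  by_cases h : p ∈ arcsOf P <;> by_cases h' : p ∈ arcsOf P' <;> simp_all [pathVec]

lemma notMem_of_mem_arcsOf_of_forall_idxOf_le [DecidableEq V] {a : V} {l₁ l₂ : List V}
    (hnd : (l₁ ++ a :: l₂).Nodup) (hT : ∀ p ∈ arcsOf (a :: l₂), p ∈ T)
    (hmax : ∀ u ∈ l₁ ++ a :: l₂, u ∈ insert s {v | ∃ u', (u', v) ∈ S ∩ T} →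
      (l₁ ++ a :: l₂).idxOf u ≤ (l₁ ++ a :: l₂).idxOf a)
    {p : V × V} (hp : p ∈ arcsOf (a :: l₂)) : p ∉ S := fun hpS => by
  have hu : p.2 ∈ l₂ := snd_mem_tail_of_mem_arcsOf hp
  have := hmax p.2 (by simp [hu]) (Or.inr ⟨p.1, hpS, hT p hp⟩)
  have := hnd.idxOf_lt_idxOf_of_mem hu
  omega

lemma exists_detour [DecidableEq V] {f : V → ℕ} (hf : ∀ p ∈ A, f p.1 < f p.2) (hT : T ⊆ A)
    (harb : ∀ v : V, ∃! l : List V, IsPathOn T s v l) {e : V × V} (he : e ∈ (A \ T) \ S)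
    {a b : V} (ha_last : ∀ l : List V, IsPathOn T s e.1 l → a ∈ l ∧
        ∀ u ∈ l, u ∈ insert s {v | ∃ u', (u', v) ∈ S ∩ T} → l.idxOf u ≤ l.idxOf a)
    {L m R : List V} (hL : IsPathOn T s a L) (hm : IsPathOn (A \ S) e.2 b m)
    (hR : IsPathOn A b t R) :
    ∃ P, IsPathOn A s t P ∧ e ∈ arcsOf P ∧
      (∀ p ∈ S, p ∈ arcsOf P ↔ p ∈ arcsOf L ∨ p ∈ arcsOf R) ∧
      ∀ p ∈ arcsOf P, p ∉ T → p ≠ e → f e.2 ≤ f p.1 ∨ f b < f p.2 := by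
  obtain ⟨⟨heA, -⟩, heS⟩ := he
  obtain ⟨lv, hlv, -⟩ := harb e.1
  obtain ⟨ha, hmax⟩ := ha_last lv hlv
  obtain ⟨l₁, l₂, rfl, hl₁, hl₂⟩ := hlv.split ha
  obtain rfl : l₁ ++ [a] = L := (harb a).unique hl₁ hL
  have hl₂S := fun p => notMem_of_mem_arcsOf_of_forall_idxOf_le hlv.1 hl₂.2.2.2 hmax (p := p)
  obtain ⟨P, hP, hParcs⟩ :=
    exists_isPathOn_append_arc_append hf (hlv.mono hT) heA (hm.mono Set.sdiff_subset) hR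
  rw [arcsOf_append_cons] at hParcs
  refine ⟨P, hP, by simp [hParcs], fun p hpS => ?_, fun p hp hpT hpe => ?_⟩
  · have hmS : p ∉ arcsOf m := fun h => (hm.2.2.2 p h).2 hpS
    have : p ≠ e := by rintro rfl; exact heS hpS
    simp only [hParcs, List.mem_append, List.mem_cons]
    grind
  · simp only [hParcs, List.mem_append, List.mem_cons] at hp
    rcases hp with (hp | hp) | rfl | hp | hp
    · exact absurd (hl₁.2.2.2 p hp) hpT
    · exact absurd (hl₂.2.2.2 p hp) hpT
    · exact absurd rfl hpe
    · exact Or.inl (hm.rank_head_le (fun q hq => hf q hq.1) (fst_mem_of_mem_arcsOf hp))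
    · exact Or.inr ((hR.rank_head_le hf (fst_mem_of_mem_arcsOf hp)).trans_lt
        (hf p (hR.2.2.2 p hp)))

end Detour

/-- Setup of Claim 2 (`distinct pairs`): `G` is a DAG with arc set `A` in which every arc
lies on an `s`-`t`-path, `ψ` is a topological ordering, `S ⊆ A` is identifying for the
`s`-`t`-paths, `T ⊆ A` is a (spanning) arborescence rooted at `s` (unique `T`-path from
`s` to every node), `S' = A \ T`, `V_s = {s} ∪ {heads of arcs of S ∩ T}`,
`V_t = {t} ∪ {tails of arcs of S}`, and for `e = (v, w) ∈ S'` the node `vs e` is the last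
element of `V_s` on the unique `s`-`v`-path in `T`, while `vt e` is the `ψ`-minimal node
of `V_t` reachable from `w` in `(V, A \ S)`.  Conclusion: for all `e, e' ∈ S' \ S`,
if `vs e = vs e'` and `vt e = vt e'` then `e = e'`. -/
theorem stmt12 {V : Type*} [Fintype V] [DecidableEq V] (A : Set (V × V)) (s t : V)
    (hacyc : IsAcyclicDigraph A)
    (hcov : ∀ e ∈ A, ∃ l, IsPathOn A s t l ∧ e ∈ arcsOf l)
    (ψ : V ≃ Fin (Fintype.card V))
    (hψ : ∀ e ∈ A, (ψ e.1 : ℕ) ≤ (ψ e.2 : ℕ))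
    (S : Set (V × V)) (hS : S ⊆ A) (hid : Identifying (XPath A s t) S)
    (T : Set (V × V)) (hT : T ⊆ A)
    (harb : ∀ v : V, ∃! l : List V, IsPathOn T s v l)
    (vs vt : V × V → V)
    (hvs : ∀ e ∈ A \ T, ∀ l : List V, IsPathOn T s e.1 l →
      vs e ∈ insert s {v | ∃ u, (u, v) ∈ S ∩ T} ∧ vs e ∈ l ∧
        ∀ u ∈ l, u ∈ insert s {v | ∃ u', (u', v) ∈ S ∩ T} →
          l.idxOf u ≤ l.idxOf (vs e))
    (hvt : ∀ e ∈ A \ T,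
      vt e ∈ insert t {v | ∃ w, (v, w) ∈ S} ∧
      (∃ l, IsPathOn (A \ S) e.2 (vt e) l) ∧
      ∀ u ∈ insert t {v | ∃ w, (v, w) ∈ S},
        (∃ l, IsPathOn (A \ S) e.2 u l) → (ψ (vt e) : ℕ) ≤ (ψ u : ℕ)) :
    ∀ e ∈ (A \ T) \ S, ∀ e' ∈ (A \ T) \ S,
      vs e = vs e' → vt e = vt e' → e = e' := by
  intro e he e' he' hvs_eq hvt_eq
  by_contra hne
  have hf := hacyc.lt_of_le (Fin.val_injective.comp ψ.injective) hψ
  have hfS : ∀ p ∈ A \ S, (Fin.val ∘ ψ) p.1 < (Fin.val ∘ ψ) p.2 := fun p hp => hf p hp.1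
  obtain ⟨L, hL, -⟩ := harb (vs e)
  obtain ⟨R, hR⟩ := exists_isPathOn_of_mem_target_or_tail hcov hS (hvt e he.1).1
  obtain ⟨m, hm⟩ := (hvt e he.1).2.1
  obtain ⟨m', hm'⟩ := (hvt e' he'.1).2.1
  obtain ⟨P, hP, heP, hPS, hPrank⟩ :=
    exists_detour hf hT harb he (fun l hl => (hvs e he.1 l hl).2) hL hm hR
  obtain ⟨P', hP', he'P', hP'S, hP'rank⟩ := exists_detour hf hT harb he'
    (fun l hl => (hvs e' he'.1 l hl).2) (hvs_eq ▸ hL) hm' (hvt_eq ▸ hR)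
  have hPP' := hid.mem_arcsOf_iff hP hP' fun p hp => (hPS p hp).trans (hP'S p hp).symm
  have he'_behind := hPrank e' ((hPP' e').2 he'P') he'.1.2 (Ne.symm hne)
  have he_behind := hP'rank e ((hPP' e).1 heP) he.1.2 hne
  have hw_le := hm.rank_head_le_last hfS
  have hw'_le := hm'.rank_head_le_last hfS
  have hvw := hf e he.1.1
  have hvw' := hf e' he'.1.1
  omega
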